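/- (Mader's theorem) Let G=(V,E) be a finite simple unweighted graph and let d be a positive integer. If |E|/|V| ≥ d, then there exists a subset S ⊆ V such that the induced subgraph G[S] is (⌊d/2⌋ + 1)-vertex-connected and every vertex of G[S] has degree strictly greater than d in G[S]. -/

import Mathlib

open Finset
open scoped Classical

noncomputable section

variable {V : Type*} [Fintype V] [DecidableEq V]

/-- The set of edges of `G` with both endpoints in `S`, i.e. the edge set `E(S)`
of the induced subgraph `G[S]`. -/
def edgesIn (G : SimpleGraph V) (S : Finset V) : Finset (Sym2 V) :=
  Finset.univ.filter (fun e => e ∈ G.edgeSet ∧ ∀ v ∈ e, v ∈ S)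

/-- The (unweighted) degree of a vertex `v` in the induced subgraph `G[S]`. -/
def ndeg (G : SimpleGraph V) (S : Finset V) (v : V) : ℕ :=
  ((edgesIn G S).filter (fun e => v ∈ e)).card

/-- `G[S]` is `k`-vertex-connected: it has at least `k+1` vertices, and deleting any set
of fewer than `k` vertices leaves a connected graph. -/
def VertexConnected (G : SimpleGraph V) (S : Finset V) (k : ℕ) : Prop :=
  k + 1 ≤ S.card ∧ ∀ D : Finset V, D ⊆ S → D.card < k →
    (G.induce ((S \ D : Finset V) : Set V)).Connected

/-!
Call `S` *dense* if `|S| > d` and `d|S| ≤ |E(S)| + d⌊d/2⌋`. The density hypothesis makes `V`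
dense; take an inclusion-minimal dense `S`. Deleting a vertex of degree `≤ d` would leave a
dense set, so `G[S]` has minimum degree `> d`; this also forces both sides of a separation to
have more than `d` vertices. If a set `D` of at most `⌊d/2⌋` vertices separated `G[S]` into
`A` and `B`, then `A ∪ D` and `B ∪ D` are not dense, and adding their edge inequalities gives
`d|S| + d|D| > |E(S)| + 2d⌊d/2⌋`, contradicting the density of `S`.
-/

section Edges

variable {G : SimpleGraph V}

lemma mem_edgesIn {S : Finset V} {e : Sym2 V} :
    e ∈ edgesIn G S ↔ e ∈ G.edgeSet ∧ ∀ v ∈ e, v ∈ S := by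
  simp [edgesIn]

lemma card_edgesIn_le_choose (S : Finset V) : #(edgesIn G S) ≤ (#S).choose 2 := by
  rw [← Sym2.card_image_offDiag]
  refine card_le_card fun e he => ?_
  induction e using Sym2.ind with
  | _ p q =>
    obtain ⟨hpq, hS⟩ := mem_edgesIn.mp he
    exact mem_image.mpr ⟨(p, q), mem_offDiag.mpr
      ⟨hS p (Sym2.mem_mk_left p q), hS q (Sym2.mem_mk_right p q), G.ne_of_adj hpq⟩, rfl⟩

lemma ndeg_le_card_filter_adj (S : Finset V) (v : V) : ndeg G S v ≤ #(S.filter (G.Adj v)) := by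
  refine card_le_card_of_surjOn (fun w => s(v, w)) fun e he => ?_
  obtain ⟨he, hv⟩ := mem_filter.mp he
  obtain ⟨w, rfl⟩ := Sym2.mem_iff_exists.mp hv
  obtain ⟨hvw, hS⟩ := mem_edgesIn.mp he
  exact ⟨w, mem_filter.mpr ⟨hS w (Sym2.mem_mk_right v w), hvw⟩, rfl⟩

lemma card_edgesIn_le_card_edgesIn_erase_add_ndeg (S : Finset V) (v : V) :
    #(edgesIn G S) ≤ #(edgesIn G (S.erase v)) + ndeg G S v := by
  refine (card_le_card fun e he => ?_).trans (card_union_le _ _)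
  by_cases hv : v ∈ e
  · exact mem_union_right _ (mem_filter.mpr ⟨he, hv⟩)
  · obtain ⟨he, hS⟩ := mem_edgesIn.mp he
    exact mem_union_left _ (mem_edgesIn.mpr
      ⟨he, fun w hw => mem_erase.mpr ⟨fun h => hv (h ▸ hw), hS w hw⟩⟩)

lemma edgesIn_union_subset {U₁ U₂ : Finset V}
    (hsep : ∀ u ∈ U₁, u ∉ U₂ → ∀ w ∈ U₂, w ∉ U₁ → ¬ G.Adj u w) :
    edgesIn G (U₁ ∪ U₂) ⊆ edgesIn G U₁ ∪ edgesIn G U₂ := by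
  intro e he
  induction e using Sym2.ind with
  | _ p q =>
    obtain ⟨hpq, hU⟩ := mem_edgesIn.mp he
    have hp := mem_union.mp (hU p (Sym2.mem_mk_left p q))
    have hq := mem_union.mp (hU q (Sym2.mem_mk_right p q))
    simp only [mem_union, mem_edgesIn, Sym2.mem_iff, forall_eq_or_imp, forall_eq]
    have := hsep p; have := hsep q; have := hpq.symm
    tauto

end Edges

lemma exists_adj_closed_of_not_connected_induce {α : Type*} {G : SimpleGraph α} {T : Finset α}
    (hT : T.Nonempty) (h : ¬ (G.induce (T : Set α)).Connected) :
    ∃ A ⊆ T, ∃ a ∈ A, ∃ b ∈ T, b ∉ A ∧ ∀ u ∈ A, ∀ w ∈ T, G.Adj u w → w ∈ A := by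
  have : Nonempty (T : Set α) := hT.coe_sort
  obtain ⟨x, y, hxy⟩ : ∃ x y, ¬ (G.induce (T : Set α)).Reachable x y := by
    by_contra! hall
    exact h ((SimpleGraph.connected_iff _).mpr ⟨hall, this⟩)
  refine ⟨T.filter fun w => ∃ hw : w ∈ T, (G.induce (T : Set α)).Reachable x ⟨w, hw⟩,
    filter_subset _ _, x, mem_filter.mpr ⟨x.2, x.2, .rfl⟩, y, y.2,
    fun hy => hxy (mem_filter.mp hy).2.2, fun u hu w hw huw => ?_⟩
  obtain ⟨-, hu, hxu⟩ := mem_filter.mp hu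
  exact mem_filter.mpr ⟨hw, hw, hxu.trans (SimpleGraph.Adj.reachable (G := G.induce _) huw)⟩

/-- The constant `d⌊d/2⌋` is the edge surplus that a separator of at most `⌊d/2⌋` vertices
can absorb when `S` is split along it. -/
def IsMaderDense (G : SimpleGraph V) (d : ℕ) (S : Finset V) : Prop :=
  d + 1 ≤ #S ∧ d * #S ≤ #(edgesIn G S) + d * (d / 2)

section Dense

variable {G : SimpleGraph V} {d : ℕ} {S : Finset V}

lemma isMaderDense_univ (hn : 0 < Fintype.card V)
    (hE : d * Fintype.card V ≤ #(edgesIn G univ)) : IsMaderDense G d univ := by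
  have hchoose := card_edgesIn_le_choose (G := G) univ
  rw [card_univ, Nat.choose_two_right] at hchoose
  refine ⟨?_, by rw [card_univ]; omega⟩
  rw [card_univ]
  by_contra! hsmall
  have : Fintype.card V * (Fintype.card V - 1) < Fintype.card V * (d + 1) :=
    Nat.mul_lt_mul_of_pos_left (by omega) hn
  nlinarith [Nat.div_mul_le_self (Fintype.card V * (Fintype.card V - 1)) 2]

lemma IsMaderDense.add_two_le_card (hd : 0 < d) (hS : IsMaderDense G d S) : d + 2 ≤ #S := by
  obtain ⟨hcard, hdense⟩ := hS
  by_contra! hlt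
  have hS : #S = d + 1 := by omega
  have hchoose := card_edgesIn_le_choose (G := G) S
  rw [hS, Nat.choose_two_right, Nat.add_sub_cancel] at hchoose
  rw [hS] at hdense
  -- `|E(S)| ≤ d(d+1)/2` is too small, as `2⌊d/2⌋ ≤ d`.
  nlinarith [Nat.div_mul_le_self ((d + 1) * d) 2, Nat.div_mul_le_self d 2]

lemma IsMaderDense.lt_ndeg_of_minimal (hd : 0 < d)
    (hmin : Minimal (IsMaderDense G d) S) {v : V} (hv : v ∈ S) : d < ndeg G S v := by
  by_contra! hdeg
  have hcard := hmin.prop.add_two_le_card hd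
  refine hmin.not_prop_of_lt (erase_ssubset hv) ⟨?_, ?_⟩
  · rw [card_erase_of_mem hv]; omega
  · have := card_edgesIn_le_card_edgesIn_erase_add_ndeg (G := G) S v
    have := hmin.prop.2
    rw [card_erase_of_mem hv, Nat.mul_sub_one]
    omega

lemma IsMaderDense.add_two_le_card_of_neighbors_subset (hd : 0 < d)
    (hmin : Minimal (IsMaderDense G d) S) {U : Finset V} {v : V} (hvS : v ∈ S)
    (hvU : v ∈ U) (hU : ∀ w ∈ S, G.Adj v w → w ∈ U) : d + 2 ≤ #U := by
  have hsub : S.filter (G.Adj v) ⊆ U.erase v := fun w hw => by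
    obtain ⟨hwS, hvw⟩ := mem_filter.mp hw
    exact mem_erase.mpr ⟨(G.ne_of_adj hvw).symm, hU w hwS hvw⟩
  have := (IsMaderDense.lt_ndeg_of_minimal hd hmin hvS).trans_le
    ((ndeg_le_card_filter_adj S v).trans (card_le_card hsub))
  rw [card_erase_of_mem hvU] at this
  omega

lemma IsMaderDense.not_separated_of_minimal (hd : 0 < d)
    (hmin : Minimal (IsMaderDense G d) S) {D A : Finset V} (hDS : D ⊆ S) (hD : #D ≤ d / 2)
    (hA : A ⊆ S \ D) {a b : V} (ha : a ∈ A) (hb : b ∈ S \ D) (hbA : b ∉ A)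
    (hclosed : ∀ u ∈ A, ∀ w ∈ S \ D, G.Adj u w → w ∈ A) : False := by
  have hAS : A ⊆ S := hA.trans sdiff_subset
  have haS : a ∈ S := (mem_sdiff.mp (hA ha)).1
  have hbS : b ∈ S := (mem_sdiff.mp hb).1
  have hsep : ∀ u ∈ A ∪ D, u ∉ S \ A → ∀ w ∈ S \ A, w ∉ A ∪ D → ¬ G.Adj u w := by
    intro u hu huA w hw hwAD huw
    have hu : u ∈ A := by
      by_contra h
      exact huA (mem_sdiff.mpr ⟨union_subset hAS hDS hu, h⟩)
    have hwD : w ∉ D := fun h => hwAD (mem_union_right _ h)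
    exact (mem_sdiff.mp hw).2 (hclosed u hu w (mem_sdiff.mpr ⟨(mem_sdiff.mp hw).1, hwD⟩) huw)
  have hsplit : (A ∪ D) ∪ (S \ A) = S := by
    rw [union_comm A D, union_assoc, union_sdiff_of_subset hAS, union_eq_right.mpr hDS]
  have hU₁ : ¬ IsMaderDense G d (A ∪ D) := hmin.not_prop_of_lt <|
    ssubset_of_subset_of_ne (union_subset hAS hDS) fun h =>
      hbA (mem_union.mp (h ▸ hbS) |>.resolve_right (mem_sdiff.mp hb).2)
  have hU₂ : ¬ IsMaderDense G d (S \ A) := hmin.not_prop_of_lt <|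
    ssubset_of_subset_of_ne sdiff_subset fun h => (mem_sdiff.mp (h ▸ haS)).2 ha
  have hcard₁ : d + 2 ≤ #(A ∪ D) :=
    IsMaderDense.add_two_le_card_of_neighbors_subset hd hmin haS (mem_union_left _ ha)
      fun w hw haw => by
        by_cases hwD : w ∈ D
        · exact mem_union_right _ hwD
        · exact mem_union_left _ (hclosed a ha w (mem_sdiff.mpr ⟨hw, hwD⟩) haw)
  have hcard₂ : d + 2 ≤ #(S \ A) :=
    IsMaderDense.add_two_le_card_of_neighbors_subset hd hmin hbS (mem_sdiff.mpr ⟨hbS, hbA⟩)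
      fun w hw hbw => mem_sdiff.mpr ⟨hw, fun hwA => hbA (hclosed w hwA b hb hbw.symm)⟩
  have hedges : #(edgesIn G S) ≤ #(edgesIn G (A ∪ D)) + #(edgesIn G (S \ A)) := by
    have := card_le_card (edgesIn_union_subset hsep)
    rw [hsplit] at this
    exact this.trans (card_union_le _ _)
  have hsum : #(A ∪ D) + #(S \ A) = #S + #D := by
    rw [card_union_of_disjoint (disjoint_of_subset_left hA sdiff_disjoint),
      card_sdiff_of_subset hAS]
    have := card_le_card hAS
    omega
  have hdsum := congrArg (d * ·) hsum
  simp only [mul_add] at hdsum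
  have := Nat.mul_le_mul_left d hD
  have hS := hmin.prop
  unfold IsMaderDense at hU₁ hU₂ hS
  omega

lemma IsMaderDense.vertexConnected_of_minimal (hd : 0 < d)
    (hmin : Minimal (IsMaderDense G d) S) : VertexConnected G S (d / 2 + 1) := by
  have hcard := hmin.prop.add_two_le_card hd
  refine ⟨by omega, fun D hDS hD => ?_⟩
  by_contra hconn
  have hne : (S \ D).Nonempty := by
    rw [← card_pos, card_sdiff_of_subset hDS]
    omega
  obtain ⟨A, hA, a, ha, b, hb, hbA, hclosed⟩ :=
    exists_adj_closed_of_not_connected_induce hne hconn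
  exact IsMaderDense.not_separated_of_minimal hd hmin hDS (by omega) hA ha hb hbA hclosed

end Dense

/-- Mader's theorem: if a finite simple graph has density `|E|/|V| ≥ d` for a positive
integer `d`, then it has an induced subgraph `G[S]` that is `(⌊d/2⌋+1)`-vertex-connected
and in which every vertex has degree greater than `d`. -/
theorem mader (G : SimpleGraph V) (d : ℕ) (hd : 0 < d)
    (hdens : (d : ℝ) ≤ ((edgesIn G Finset.univ).card : ℝ) / (Fintype.card V : ℝ)) :
    ∃ S : Finset V,
      VertexConnected G S (d / 2 + 1) ∧
      ∀ v ∈ S, d < ndeg G S v := by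
  have hn : 0 < Fintype.card V := Nat.pos_of_ne_zero fun h0 => by
    simp [h0] at hdens
    omega
  have hE : d * Fintype.card V ≤ #(edgesIn G univ) := by
    exact_mod_cast (le_div_iff₀ (by exact_mod_cast hn)).mp hdens
  obtain ⟨S, -, hmin⟩ := exists_minimal_le_of_wellFoundedLT _ univ (isMaderDense_univ hn hE)
  exact ⟨S, IsMaderDense.vertexConnected_of_minimal hd hmin,
    fun v hv => IsMaderDense.lt_ndeg_of_minimal hd hmin hv⟩
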